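/- arXiv:1611.05796 — 6 statements merged into one kernel-verified Lean document; each statement's English description precedes it below -/
import Mathlib

section
/- For any rate matrix Q indexed by a nonempty finite set 𝒳, the family of matrices T_t^s := e^{Q(s−t)}, defined for all reals 0 ≤ t ≤ s, is a well-behaved transition matrix system. That is: (i) for every Δ ≥ 0, the matrix exponential e^{QΔ} is a transition matrix; (ii) T_t^t = I for all t ≥ 0 and T_t^s = T_t^r · T_r^s for all 0 ≤ t ≤ r ≤ s; and (iii) for every t ≥ 0, limsup_{Δ→0+} (1/Δ)‖T_t^{t+Δ} − I‖ < +∞, and for every t > 0, limsup_{Δ→0+} (1/Δ)‖T_{t−Δ}^t − I‖ < +∞. -/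
open scoped BigOperators Topology

/-- The operator norm of a matrix induced by the supremum norm on `X → ℝ`:
`‖A‖ = max_{x} Σ_{y} |A x y|`. -/
noncomputable def matNorm {X : Type*} [Fintype X] (A : Matrix X X ℝ) : ℝ :=
  ⨆ x, ∑ y, |A x y|

/-- A transition matrix: nonnegative entries, rows summing to one. -/
def IsTransitionMatrix {X : Type*} [Fintype X] (T : Matrix X X ℝ) : Prop :=
  (∀ x y, 0 ≤ T x y) ∧ ∀ x, ∑ y, T x y = 1

/-- A (transition) rate matrix: nonnegative off-diagonal entries, rows summing to zero. -/
def IsRateMatrix {X : Type*} [Fintype X] (Q : Matrix X X ℝ) : Prop :=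
  (∀ x y, x ≠ y → 0 ≤ Q x y) ∧ ∀ x, ∑ y, Q x y = 0

/-- The matrix exponential `e^A = Σ_{k≥0} A^k / k!`. -/
noncomputable def mexp {X : Type*} [Fintype X] [DecidableEq X] (A : Matrix X X ℝ) :
    Matrix X X ℝ :=
  ∑' k : ℕ, ((k.factorial : ℝ)⁻¹) • A ^ k

/-- The exponential transition matrix system `T_t^s = e^{Q(s−t)}` corresponding to `Q`. -/
noncomputable def expSystem {X : Type*} [Fintype X] [DecidableEq X]
    (Q : Matrix X X ℝ) (t s : ℝ) : Matrix X X ℝ :=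
  mexp ((s - t) • Q)

/-!
Off the diagonal a rate matrix `Q` is nonnegative, so `Q + c • 1` is entrywise nonnegative for
large `c`, and `e^{ΔQ} = e^{-cΔ} e^{Δ(Q + c • 1)}` is a nonnegative series. Since `Q` kills the
constant vector `1`, so does every `Q^k` with `k ≥ 1`, whence `e^{ΔQ} 1 = 1`: the rows sum to one.
The semigroup law is `e^{A+B} = e^A e^B` for commuting `A`, `B`, and the difference quotients
are bounded because `Δ ↦ e^{ΔQ}` is differentiable at `0`.
-/

open scoped Matrix

section MatrixExponential

variable {X : Type*} [Fintype X] [DecidableEq X]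

theorem mexp_eq_exp (A : Matrix X X ℝ) : mexp A = NormedSpace.exp A := by
  rw [NormedSpace.exp_eq_tsum ℝ]; rfl

theorem mexp_zero : mexp (0 : Matrix X X ℝ) = 1 := by
  rw [mexp_eq_exp, NormedSpace.exp_zero]

theorem mexp_add_of_commute {A B : Matrix X X ℝ} (h : Commute A B) :
    mexp (A + B) = mexp A * mexp B := by
  simp only [mexp_eq_exp]
  exact Matrix.exp_add_of_commute A B h

section LinftyOpNorm

attribute [local instance] Matrix.linftyOpNormedRing Matrix.linftyOpNormedAlgebra

theorem hasSum_mexp (A : Matrix X X ℝ) :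
    HasSum (fun k : ℕ => (k.factorial : ℝ)⁻¹ • A ^ k) (mexp A) := by
  rw [mexp_eq_exp]
  exact NormedSpace.exp_series_hasSum_exp' A

theorem mexp_smul_one (r : ℝ) : mexp (r • (1 : Matrix X X ℝ)) = Real.exp r • 1 := by
  rw [mexp_eq_exp, ← Algebra.algebraMap_eq_smul_one, Real.exp_eq_exp_ℝ,
    ← Algebra.algebraMap_eq_smul_one]
  exact (NormedSpace.algebraMap_exp_comm r).symm

theorem matNorm_le_linfty_opNorm (A : Matrix X X ℝ) : matNorm A ≤ ‖A‖ := by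
  refine Real.iSup_le (fun x => ?_) (norm_nonneg A)
  rw [Matrix.linfty_opNorm_def]
  have hrow : ∑ y, |A x y| = ((∑ y, ‖A x y‖₊ : NNReal) : ℝ) := by
    push_cast
    rfl
  rw [hrow]
  exact_mod_cast Finset.le_sup (f := fun i => ∑ j, ‖A i j‖₊) (Finset.mem_univ x)

theorem isBigO_mexp_smul_sub_one (Q : Matrix X X ℝ) :
    (fun Δ : ℝ => mexp (Δ • Q) - 1) =O[𝓝 0] fun Δ => Δ := by
  have hderiv := (hasDerivAt_exp_smul_const (𝕂 := ℝ) (𝔸 := Matrix X X ℝ) Q 0).isBigO_sub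
  simp only [zero_smul, NormedSpace.exp_zero, sub_zero] at hderiv
  simp only [mexp_eq_exp]
  exact hderiv

theorem isBoundedUnder_inv_mul_matNorm_mexp_smul_sub_one (Q : Matrix X X ℝ) :
    Filter.IsBoundedUnder (· ≤ ·) (𝓝[>] (0 : ℝ))
      (fun Δ : ℝ => Δ⁻¹ * matNorm (mexp (Δ • Q) - 1)) := by
  obtain ⟨C, hC⟩ := (isBigO_mexp_smul_sub_one Q).bound
  refine Filter.isBoundedUnder_of_eventually_le (a := C) ?_
  filter_upwards [nhdsWithin_le_nhds hC, self_mem_nhdsWithin] with Δ hΔC (hΔ : 0 < Δ)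
  calc Δ⁻¹ * matNorm (mexp (Δ • Q) - 1) ≤ Δ⁻¹ * (C * Δ) := by
        gcongr
        simpa [abs_of_pos hΔ] using (matNorm_le_linfty_opNorm _).trans hΔC
    _ = C := by field_simp

end LinftyOpNorm

theorem pow_apply_nonneg {M : Matrix X X ℝ} (hM : ∀ x y, 0 ≤ M x y) (k : ℕ) (x y : X) :
    0 ≤ (M ^ k) x y := by
  induction k generalizing y with
  | zero => by_cases h : x = y <;> simp [h]
  | succ k ih =>
    rw [pow_succ, Matrix.mul_apply]
    exact Finset.sum_nonneg fun z _ => mul_nonneg (ih z) (hM z y)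

theorem mexp_apply_nonneg {M : Matrix X X ℝ} (hM : ∀ x y, 0 ≤ M x y) (x y : X) :
    0 ≤ mexp M x y := by
  have hentry := Pi.hasSum.mp (Pi.hasSum.mp (hasSum_mexp M) x) y
  exact hentry.nonneg fun k => mul_nonneg (by positivity) (pow_apply_nonneg hM k x y)

theorem mexp_apply_nonneg_of_offDiag_nonneg {M : Matrix X X ℝ}
    (hM : ∀ x y, x ≠ y → 0 ≤ M x y) (x y : X) : 0 ≤ mexp M x y := by
  obtain ⟨c, hc⟩ : ∃ c : ℝ, ∀ x, -M x x ≤ c := by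
    obtain ⟨c, hc⟩ := Finite.bddAbove_range fun x => -M x x
    exact ⟨c, fun x => hc ⟨x, rfl⟩⟩
  have hshift : ∀ x y, 0 ≤ (M + c • 1) x y := by
    intro x y
    rcases eq_or_ne x y with rfl | hxy
    · simp only [Matrix.add_apply, Matrix.smul_apply, Matrix.one_apply_eq, smul_eq_mul, mul_one]
      linarith [hc x]
    · simpa [Matrix.one_apply_ne hxy] using hM x y hxy
  have hsplit : M = (-c) • (1 : Matrix X X ℝ) + (M + c • 1) := by module
  have hcomm : Commute ((-c) • (1 : Matrix X X ℝ)) (M + c • 1) := (Commute.one_left _).smul_left _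
  rw [hsplit, mexp_add_of_commute hcomm, mexp_smul_one, smul_mul_assoc, one_mul,
    Matrix.smul_apply, smul_eq_mul]
  exact mul_nonneg (Real.exp_nonneg _) (mexp_apply_nonneg hshift x y)

theorem mexp_mulVec_of_mulVec_eq_zero {M : Matrix X X ℝ} {v : X → ℝ} (hMv : M *ᵥ v = 0) :
    mexp M *ᵥ v = v := by
  let evalAt : Matrix X X ℝ →+ (X → ℝ) :=
    { toFun := fun A => A *ᵥ v
      map_zero' := Matrix.zero_mulVec v
      map_add' := fun A B => Matrix.add_mulVec A B v }
  have hseries := (hasSum_mexp M).map evalAt (continuous_id.matrix_mulVec continuous_const)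
  have hterms : ∀ k ≠ 0, evalAt ((k.factorial : ℝ)⁻¹ • M ^ k) = 0 := by
    intro k hk
    obtain ⟨k, rfl⟩ := Nat.exists_eq_succ_of_ne_zero hk
    simp [evalAt, Matrix.smul_mulVec, pow_succ, ← Matrix.mulVec_mulVec, hMv]
  simpa [evalAt] using hseries.unique (hasSum_single 0 hterms)

end MatrixExponential

namespace IsRateMatrix

variable {X : Type*} [Fintype X] {Q : Matrix X X ℝ}

theorem smul (hQ : IsRateMatrix Q) {Δ : ℝ} (hΔ : 0 ≤ Δ) : IsRateMatrix (Δ • Q) :=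
  ⟨fun x y hxy => mul_nonneg hΔ (hQ.1 x y hxy),
    fun x => by simp [← Finset.mul_sum, hQ.2 x]⟩

theorem isTransitionMatrix_mexp [DecidableEq X] (hQ : IsRateMatrix Q) :
    IsTransitionMatrix (mexp Q) := by
  refine ⟨mexp_apply_nonneg_of_offDiag_nonneg hQ.1, fun x => ?_⟩
  have hQ1 : Q *ᵥ (fun _ => 1) = 0 :=
    funext fun x => by simpa [Matrix.mulVec, dotProduct] using hQ.2 x
  simpa [Matrix.mulVec, dotProduct] using congrFun (mexp_mulVec_of_mulVec_eq_zero hQ1) x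

end IsRateMatrix

theorem expSystem_self {X : Type*} [Fintype X] [DecidableEq X] (Q : Matrix X X ℝ) (t : ℝ) :
    expSystem Q t t = 1 := by
  simp [expSystem, mexp_zero]

theorem expSystem_mul_expSystem {X : Type*} [Fintype X] [DecidableEq X] (Q : Matrix X X ℝ)
    (t r s : ℝ) : expSystem Q t r * expSystem Q r s = expSystem Q t s := by
  have hsum : (s - t) • Q = (r - t) • Q + (s - r) • Q := by module
  rw [expSystem, expSystem, expSystem, hsum,
    mexp_add_of_commute (((Commute.refl Q).smul_right _).smul_left _)]

theorem stmt3_general {X : Type*} [Fintype X] [DecidableEq X]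
    (Q : Matrix X X ℝ) (hQ : IsRateMatrix Q) :
    (∀ Δ : ℝ, 0 ≤ Δ → IsTransitionMatrix (mexp (Δ • Q))) ∧
    (∀ t : ℝ, 0 ≤ t → expSystem Q t t = 1) ∧
    (∀ t r s : ℝ, 0 ≤ t → t ≤ r → r ≤ s →
      expSystem Q t s = expSystem Q t r * expSystem Q r s) ∧
    (∀ t : ℝ, 0 ≤ t →
      Filter.IsBoundedUnder (· ≤ ·) (𝓝[>] (0 : ℝ))
        (fun Δ : ℝ => Δ⁻¹ * matNorm (expSystem Q t (t + Δ) - 1))) ∧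
    (∀ t : ℝ, 0 < t →
      Filter.IsBoundedUnder (· ≤ ·) (𝓝[>] (0 : ℝ))
        (fun Δ : ℝ => Δ⁻¹ * matNorm (expSystem Q (t - Δ) t - 1))) := by
  have hquot := isBoundedUnder_inv_mul_matNorm_mexp_smul_sub_one Q
  refine ⟨fun Δ hΔ => (hQ.smul hΔ).isTransitionMatrix_mexp, fun t _ => expSystem_self Q t,
    fun t r s _ _ _ => (expSystem_mul_expSystem Q t r s).symm, fun t _ => ?_, fun t _ => ?_⟩
  · simpa [expSystem] using hquot
  · simpa [expSystem] using hquot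

/-- For any rate matrix `Q`, the family `T_t^s = e^{Q(s−t)}` is a well-behaved transition
matrix system: (i) every `e^{QΔ}` with `Δ ≥ 0` is a transition matrix; (ii) `T_t^t = I` and
`T_t^s = T_t^r * T_r^s` for `0 ≤ t ≤ r ≤ s`; (iii) the right- and left-sided difference
quotients `(1/Δ)‖T_t^{t±Δ} − I‖` are eventually bounded as `Δ → 0⁺`, i.e. their limit
superior is finite. -/
theorem stmt3 {X : Type*} [Fintype X] [Nonempty X] [DecidableEq X]
    (Q : Matrix X X ℝ) (hQ : IsRateMatrix Q) :
    (∀ Δ : ℝ, 0 ≤ Δ → IsTransitionMatrix (mexp (Δ • Q))) ∧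
    (∀ t : ℝ, 0 ≤ t → expSystem Q t t = 1) ∧
    (∀ t r s : ℝ, 0 ≤ t → t ≤ r → r ≤ s →
      expSystem Q t s = expSystem Q t r * expSystem Q r s) ∧
    (∀ t : ℝ, 0 ≤ t →
      Filter.IsBoundedUnder (· ≤ ·) (𝓝[>] (0 : ℝ))
        (fun Δ : ℝ => Δ⁻¹ * matNorm (expSystem Q t (t + Δ) - 1))) ∧
    (∀ t : ℝ, 0 < t →
      Filter.IsBoundedUnder (· ≤ ·) (𝓝[>] (0 : ℝ))
        (fun Δ : ℝ => Δ⁻¹ * matNorm (expSystem Q (t - Δ) t - 1))) :=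
  stmt3_general Q hQ
end

section
/- Let T̲_1, …, T̲_n and S̲_1, …, S̲_n be two finite sequences of lower transition operators on ℝ^𝒳. Then ‖T̲_1∘T̲_2∘⋯∘T̲_n − S̲_1∘S̲_2∘⋯∘S̲_n‖ ≤ Σ_{i=1}^n ‖T̲_i − S̲_i‖, where for maps A, B : ℝ^𝒳 → ℝ^𝒳 we write ‖A − B‖ := sup{‖Af − Bf‖ : f ∈ ℝ^𝒳, ‖f‖ = 1}. -/
open scoped BigOperators

/-- A lower transition operator on `ℝ^𝒳`: bounded below by the minimum (LT1),
super-additive (LT2), and non-negatively homogeneous (LT3). -/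
def IsLowerTransitionOperator {X : Type*} [Fintype X] (T : (X → ℝ) → (X → ℝ)) : Prop :=
  (∀ f : X → ℝ, ∀ x : X, (⨅ y, f y) ≤ T f x) ∧
  (∀ f g : X → ℝ, ∀ x : X, T f x + T g x ≤ T (f + g) x) ∧
  (∀ c : ℝ, 0 ≤ c → ∀ f : X → ℝ, T (c • f) = c • T f)

/-- The distance `‖A − B‖ = sup{‖Af − Bf‖ : ‖f‖ = 1}` between two maps of `ℝ^𝒳`,
where `‖·‖` is the supremum norm. -/
noncomputable def opDist {X : Type*} [Fintype X]
    (A B : (X → ℝ) → (X → ℝ)) : ℝ :=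
  ⨆ f : {f : X → ℝ // ‖f‖ = 1}, ‖A f.1 - B f.1‖

/-- The composition `T 0 ∘ T 1 ∘ ⋯ ∘ T (n-1)` of a finite family of operators,
in the given order. -/
def compFamily {X : Type*} {n : ℕ} (T : Fin n → ((X → ℝ) → (X → ℝ))) :
    (X → ℝ) → (X → ℝ) :=
  (List.ofFn T).foldr (· ∘ ·) id

/-!
The sum bound is a telescoping argument. A lower transition operator `T` is
monotone and satisfies `T f ≥ T g + min (f - g)`, hence is `1`-Lipschitz for the supremum
norm; being also positively homogeneous, `‖A f - B f‖ ≤ ‖A - B‖ ‖f‖`. Therefore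
`‖A (C f) - B (D f)‖ ≤ ‖A (C f) - B (C f)‖ + ‖B (C f) - B (D f)‖ ≤ ‖A - B‖ + ‖C - D‖`
for `‖f‖ = 1`, and an induction on `n` peels off one factor at a time, using that
compositions of lower transition operators are again lower transition operators.
-/

theorem compFamily_succ {X : Type*} {n : ℕ} (T : Fin (n + 1) → (X → ℝ) → (X → ℝ)) :
    compFamily T = T 0 ∘ compFamily fun i => T i.succ := by
  simp [compFamily, List.ofFn_succ]

section

variable {X : Type*} [Fintype X]

theorem neg_norm_le_iInf [Nonempty X] (f : X → ℝ) : -‖f‖ ≤ ⨅ y, f y :=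
  le_ciInf fun y => neg_le_of_abs_le (norm_le_pi_norm f y)

namespace IsLowerTransitionOperator

variable {T U : (X → ℝ) → (X → ℝ)}

theorem map_zero (hT : IsLowerTransitionOperator T) : T 0 = 0 := by
  simpa using hT.2.2 0 le_rfl 0

theorem apply_add_iInf_sub_le (hT : IsLowerTransitionOperator T) (f g : X → ℝ) (x : X) :
    T g x + ⨅ y, (f - g) y ≤ T f x := by
  have h := hT.2.1 g (f - g) x
  rw [add_sub_cancel] at h
  linarith [hT.1 (f - g) x]

theorem monotone (hT : IsLowerTransitionOperator T) : Monotone T := fun f g hfg x => by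
  have : Nonempty X := ⟨x⟩
  have hmin : 0 ≤ ⨅ y, (g - f) y := le_ciInf fun y => sub_nonneg.2 (hfg y)
  linarith [hT.apply_add_iInf_sub_le g f x]

theorem norm_map_sub_map_le (hT : IsLowerTransitionOperator T) (f g : X → ℝ) :
    ‖T f - T g‖ ≤ ‖f - g‖ := by
  refine (pi_norm_le_iff_of_nonneg (norm_nonneg _)).2 fun x => ?_
  have : Nonempty X := ⟨x⟩
  have hfg := hT.apply_add_iInf_sub_le f g x
  have hgf := hT.apply_add_iInf_sub_le g f x
  have hmin_fg := neg_norm_le_iInf (f - g)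
  have hmin_gf := neg_norm_le_iInf (g - f)
  rw [norm_sub_rev g f] at hmin_gf
  rw [Real.norm_eq_abs, abs_le, Pi.sub_apply]
  constructor <;> linarith

theorem norm_map_le (hT : IsLowerTransitionOperator T) (f : X → ℝ) : ‖T f‖ ≤ ‖f‖ := by
  simpa [hT.map_zero] using hT.norm_map_sub_map_le f 0

theorem comp (hT : IsLowerTransitionOperator T) (hU : IsLowerTransitionOperator U) :
    IsLowerTransitionOperator (T ∘ U) := by
  refine ⟨fun f x => ?_, fun f g x => ?_, fun c hc f => ?_⟩
  · have : Nonempty X := ⟨x⟩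
    exact (le_ciInf (hU.1 f)).trans (hT.1 (U f) x)
  · calc T (U f) x + T (U g) x ≤ T (U f + U g) x := hT.2.1 _ _ x
      _ ≤ T (U (f + g)) x := hT.monotone (fun y => hU.2.1 f g y) x
  · simp only [Function.comp_apply, hU.2.2 c hc f, hT.2.2 c hc (U f)]

end IsLowerTransitionOperator

theorem isLowerTransitionOperator_id : IsLowerTransitionOperator (id : (X → ℝ) → (X → ℝ)) :=
  ⟨fun f x => ciInf_le (Finite.bddBelow_range f) x, fun _ _ _ => le_rfl, fun _ _ _ => rfl⟩

theorem isLowerTransitionOperator_compFamily {n : ℕ} (T : Fin n → (X → ℝ) → (X → ℝ))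
    (hT : ∀ i, IsLowerTransitionOperator (T i)) : IsLowerTransitionOperator (compFamily T) := by
  induction n with
  | zero => exact isLowerTransitionOperator_id
  | succ n ih =>
    rw [compFamily_succ]
    exact (hT 0).comp (ih _ fun i => hT i.succ)

variable {A B C D : (X → ℝ) → (X → ℝ)}

theorem opDist_nonneg (A B : (X → ℝ) → (X → ℝ)) : 0 ≤ opDist A B :=
  Real.iSup_nonneg fun _ => norm_nonneg _

theorem opDist_le {c : ℝ} (hc : 0 ≤ c) (h : ∀ f, ‖f‖ = 1 → ‖A f - B f‖ ≤ c) :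
    opDist A B ≤ c :=
  Real.iSup_le (fun f => h f.1 f.2) hc

theorem bddAbove_norm_sub_of_norm_eq_one (hA : IsLowerTransitionOperator A)
    (hB : IsLowerTransitionOperator B) :
    BddAbove (Set.range fun f : {f : X → ℝ // ‖f‖ = 1} => ‖A f.1 - B f.1‖) := by
  refine ⟨2, ?_⟩
  rintro _ ⟨⟨f, hf⟩, rfl⟩
  linarith [norm_sub_le (A f) (B f), hA.norm_map_le f, hB.norm_map_le f]

theorem norm_sub_le_opDist_mul (hA : IsLowerTransitionOperator A)
    (hB : IsLowerTransitionOperator B) (f : X → ℝ) :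
    ‖A f - B f‖ ≤ opDist A B * ‖f‖ := by
  rcases eq_or_ne f 0 with rfl | hf
  · simp [hA.map_zero, hB.map_zero]
  have hr : 0 < ‖f‖ := norm_pos_iff.2 hf
  have hu : ‖‖f‖⁻¹ • f‖ = 1 := by
    rw [norm_smul, norm_inv, norm_norm, inv_mul_cancel₀ hr.ne']
  have hAB : A f - B f = ‖f‖ • (A (‖f‖⁻¹ • f) - B (‖f‖⁻¹ • f)) := by
    rw [smul_sub, ← hA.2.2 _ hr.le, ← hB.2.2 _ hr.le, smul_inv_smul₀ hr.ne']
  calc ‖A f - B f‖ = ‖f‖ * ‖A (‖f‖⁻¹ • f) - B (‖f‖⁻¹ • f)‖ := by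
        rw [hAB, norm_smul, norm_norm]
    _ ≤ ‖f‖ * opDist A B := by
        gcongr
        exact le_ciSup (bddAbove_norm_sub_of_norm_eq_one hA hB) ⟨_, hu⟩
    _ = opDist A B * ‖f‖ := mul_comm _ _

theorem opDist_comp_le (hA : IsLowerTransitionOperator A) (hB : IsLowerTransitionOperator B)
    (hC : IsLowerTransitionOperator C) (hD : IsLowerTransitionOperator D) :
    opDist (A ∘ C) (B ∘ D) ≤ opDist A B + opDist C D := by
  refine opDist_le (add_nonneg (opDist_nonneg A B) (opDist_nonneg C D)) fun f hf => ?_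
  calc ‖A (C f) - B (D f)‖ ≤ ‖A (C f) - B (C f)‖ + ‖B (C f) - B (D f)‖ :=
        norm_sub_le_norm_sub_add_norm_sub _ _ _
    _ ≤ opDist A B * ‖C f‖ + ‖C f - D f‖ :=
        add_le_add (norm_sub_le_opDist_mul hA hB _) (hB.norm_map_sub_map_le _ _)
    _ ≤ opDist A B * ‖f‖ + opDist C D * ‖f‖ := by
        gcongr
        · exact opDist_nonneg A B
        · exact hC.norm_map_le f
        · exact norm_sub_le_opDist_mul hC hD f
    _ = opDist A B + opDist C D := by rw [hf, mul_one, mul_one]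

end

theorem stmt9_general {X : Type*} [Fintype X] {n : ℕ}
    (T S : Fin n → ((X → ℝ) → (X → ℝ)))
    (hT : ∀ i, IsLowerTransitionOperator (T i))
    (hS : ∀ i, IsLowerTransitionOperator (S i)) :
    opDist (compFamily T) (compFamily S) ≤ ∑ i, opDist (T i) (S i) := by
  induction n with
  | zero => exact opDist_le le_rfl fun f _ => by simp [compFamily]
  | succ n ih =>
    rw [compFamily_succ T, compFamily_succ S, Fin.sum_univ_succ]
    calc opDist (T 0 ∘ compFamily fun i => T i.succ) (S 0 ∘ compFamily fun i => S i.succ)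
        ≤ opDist (T 0) (S 0)
            + opDist (compFamily fun i => T i.succ) (compFamily fun i => S i.succ) :=
          opDist_comp_le (hT 0) (hS 0) (isLowerTransitionOperator_compFamily _ fun i => hT i.succ)
            (isLowerTransitionOperator_compFamily _ fun i => hS i.succ)
      _ ≤ opDist (T 0) (S 0) + ∑ i : Fin n, opDist (T i.succ) (S i.succ) :=
          add_le_add_right (ih _ _ (fun i => hT i.succ) fun i => hS i.succ) _

theorem stmt9 {X : Type*} [Fintype X] [Nonempty X] {n : ℕ}
    (T S : Fin n → ((X → ℝ) → (X → ℝ)))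
    (hT : ∀ i, IsLowerTransitionOperator (T i))
    (hS : ∀ i, IsLowerTransitionOperator (S i)) :
    opDist (compFamily T) (compFamily S) ≤ ∑ i, opDist (T i) (S i) :=
  stmt9_general T S hT hS
end

section
/- Let 𝒬 be a nonempty set of rate matrices indexed by a nonempty finite set 𝒳 that is bounded, i.e. sup{‖Q‖ : Q ∈ 𝒬} < +∞, and let Q̲ be its lower envelope, defined for all f ∈ ℝ^𝒳 and x ∈ 𝒳 by [Q̲f](x) := inf{[Qf](x) : Q ∈ 𝒬}. Then Q̲ is a lower transition rate operator. -/
open scoped BigOperators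

/-- The lower envelope of a set of matrices: `[Q̲f](x) = inf{[Qf](x) : Q ∈ 𝒬}`, where a
matrix acts on `f ∈ ℝ^𝒳` by `[Qf](x) = Σ_y Q(x,y) f(y)`. -/
noncomputable def lowerEnvOp {X : Type*} [Fintype X]
    (𝒬 : Set (Matrix X X ℝ)) : (X → ℝ) → (X → ℝ) :=
  fun f x => ⨅ Q : 𝒬, (Q : Matrix X X ℝ).mulVec f x

/-- A lower transition rate operator on `ℝ^𝒳`: maps constants to zero (LR1), is
nonnegative on off-diagonal indicators (LR2), super-additive (LR3), and
non-negatively homogeneous (LR4). -/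
def IsLowerTransitionRateOperator {X : Type*} [Fintype X] [DecidableEq X]
    (Q : (X → ℝ) → (X → ℝ)) : Prop :=
  (∀ c : ℝ, Q (fun _ => c) = 0) ∧
  (∀ x y : X, y ≠ x → 0 ≤ Q (Pi.single y 1) x) ∧
  (∀ f g : X → ℝ, ∀ x : X, Q f x + Q g x ≤ Q (f + g) x) ∧
  (∀ c : ℝ, 0 ≤ c → ∀ f : X → ℝ, Q (c • f) = c • Q f)

lemma bddBelow_envRange {X : Type*} [Fintype X] [Nonempty X]
    (𝒬 : Set (Matrix X X ℝ)) (hbdd : BddAbove (matNorm '' 𝒬)) (f : X → ℝ) (x : X) :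
    BddBelow (Set.range fun Q : 𝒬 => (Q : Matrix X X ℝ).mulVec f x) := by
  obtain ⟨M, hM⟩ := hbdd
  set C : ℝ := ⨆ y, |f y| with hC
  have hCle : ∀ y, |f y| ≤ C := fun y =>
    le_ciSup (f := fun y => |f y|) (Set.Finite.bddAbove (Set.finite_range _)) y
  have hC0 : 0 ≤ C := le_trans (abs_nonneg _) (hCle (Classical.arbitrary X))
  refine ⟨-(M * C), ?_⟩
  rintro _ ⟨⟨Q, hQ⟩, rfl⟩
  have hrow : ∑ y, |Q x y| ≤ M := by
    refine le_trans (le_ciSup (f := fun x => ∑ y, |Q x y|) (Set.Finite.bddAbove (Set.finite_range _)) x) ?_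
    exact hM ⟨Q, hQ, rfl⟩
  have : |Q.mulVec f x| ≤ M * C := by
    calc |Q.mulVec f x| ≤ ∑ y, |Q x y * f y| := Finset.abs_sum_le_sum_abs _ _
      _ ≤ ∑ y, |Q x y| * C := by
          refine Finset.sum_le_sum fun y _ => ?_
          rw [abs_mul]
          exact mul_le_mul_of_nonneg_left (hCle y) (abs_nonneg _)
      _ = (∑ y, |Q x y|) * C := (Finset.sum_mul ..).symm
      _ ≤ M * C := mul_le_mul_of_nonneg_right hrow hC0
  linarith [(abs_le.mp this).1]

/-- The lower envelope of a nonempty bounded set of rate matrices is a lower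
transition rate operator. -/
theorem stmt10 {X : Type*} [Fintype X] [Nonempty X] [DecidableEq X]
    (𝒬 : Set (Matrix X X ℝ)) (hne : 𝒬.Nonempty)
    (hrate : ∀ Q ∈ 𝒬, IsRateMatrix Q)
    (hbdd : BddAbove (matNorm '' 𝒬)) :
    IsLowerTransitionRateOperator (lowerEnvOp 𝒬) := by
  have hNE : Nonempty 𝒬 := hne.to_subtype
  have hbb := bddBelow_envRange 𝒬 hbdd
  refine ⟨?_, ?_, ?_, ?_⟩
  · intro c
    funext x
    have : ∀ Q : 𝒬, (Q : Matrix X X ℝ).mulVec (fun _ => c) x = 0 := by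
      rintro ⟨Q, hQ⟩
      simp only [Matrix.mulVec, dotProduct]
      rw [← Finset.sum_mul, (hrate Q hQ).2 x, zero_mul]
    simp only [lowerEnvOp, this, ciInf_const, Pi.zero_apply]
  · intro x y hyx
    refine le_ciInf fun ⟨Q, hQ⟩ => ?_
    have : Q.mulVec (Pi.single y 1) x = Q x y := by
      simp [Matrix.mulVec, dotProduct, Pi.single_apply]
    rw [this]
    exact (hrate Q hQ).1 x y (Ne.symm hyx)
  · intro f g x
    refine le_ciInf fun Q => ?_
    have : (Q : Matrix X X ℝ).mulVec (f + g) x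
        = (Q : Matrix X X ℝ).mulVec f x + (Q : Matrix X X ℝ).mulVec g x := by
      simp [Matrix.mulVec_add]
    rw [this]
    exact add_le_add (ciInf_le (hbb f x) Q) (ciInf_le (hbb g x) Q)
  · intro c hc f
    funext x
    simp only [lowerEnvOp, Pi.smul_apply, smul_eq_mul]
    rw [Real.mul_iInf_of_nonneg hc]
    congr 1
    funext Q
    simp [Matrix.mulVec_smul]
end

section
/- Let Q̲ be a lower transition rate operator on ℝ^𝒳, and let 𝒬_Q̲ := {Q : Q is a rate matrix and Qf ≥ Q̲f pointwise for all f ∈ ℝ^𝒳} be its set of dominating rate matrices. Then 𝒬_Q̲ is nonempty and bounded (i.e. sup{‖Q‖ : Q ∈ 𝒬_Q̲} < +∞), and moreover for every f ∈ ℝ^𝒳 there exists some Q ∈ 𝒬_Q̲ such that Q̲f = Qf. -/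
open scoped BigOperators

/-- The set of rate matrices dominating a given operator `Q̲`:
`𝒬_Q̲ = {Q rate matrix : Qf ≥ Q̲f for all f}`, where a matrix acts on `f ∈ ℝ^𝒳`
by `[Qf](x) = Σ_y Q(x,y) f(y)`. -/
def dominatingSet {X : Type*} [Fintype X] (Ql : (X → ℝ) → (X → ℝ)) :
    Set (Matrix X X ℝ) :=
  {Q | IsRateMatrix Q ∧ ∀ f : X → ℝ, ∀ x : X, Ql f x ≤ Q.mulVec f x}

/-!
For each state `x`, the map `g ↦ [Q̲g](x)` is superadditive and nonnegatively homogeneous, so its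
negative is sublinear and the Hahn–Banach theorem yields, for any given `f`, a linear functional
that dominates it and agrees with it at `f`. Stacking these functionals as rows gives a matrix `Q`
with `Q ≥ Q̲` and `Qf = Q̲f`. Any matrix dominating `Q̲` is a rate matrix: testing it against the
indicators `𝟙_y` gives the off-diagonal signs (LR2), testing it against `±1` the zero row sums (LR1).
Finally, a rate matrix has row norms `-2 Q(x,x) ≤ -2 [Q̲𝟙_x](x)`, which bounds `𝒬_Q̲`.
-/

open Matrix

theorem exists_linearMap_eq_and_le_of_superadditive {E : Type*} [AddCommGroup E] [Module ℝ E]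
    (q : E → ℝ) (q_smul : ∀ c : ℝ, 0 ≤ c → ∀ v, q (c • v) = c * q v)
    (q_add : ∀ v w, q v + q w ≤ q (v + w)) (v : E) :
    ∃ φ : E →ₗ[ℝ] ℝ, φ v = q v ∧ ∀ w, q w ≤ φ w := by
  have q_zero : q 0 = 0 := by simpa using q_smul 0 le_rfl 0
  have q_add_neg : q v + q (-v) ≤ 0 := by simpa [q_zero] using q_add v (-v)
  -- `mkSpanSingleton'` rather than `mkSpanSingleton`, so that `v = 0` needs no separate case.
  let p : E →ₗ.[ℝ] ℝ := LinearPMap.mkSpanSingleton' v (-q v) fun (c : ℝ) hc => by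
    rcases smul_eq_zero.1 hc with rfl | rfl
    · exact zero_smul ℝ _
    · simp [q_zero]
  have hp : ∀ w : p.domain, p w ≤ -q w := by
    rintro ⟨w, hw⟩
    obtain ⟨c, rfl⟩ := Submodule.mem_span_singleton.1 hw
    rw [LinearPMap.mkSpanSingleton'_apply, smul_eq_mul, RingHom.id_apply]
    change c * -q v ≤ -q (c • v)
    rcases le_or_gt 0 c with hc | hc
    · rw [q_smul c hc, mul_neg]
    -- for `c < 0`, the bound is `q v + q (-v) ≤ 0` scaled by `-c`
    · rw [show c • v = (-c) • -v by rw [neg_smul_neg], q_smul (-c) (neg_nonneg.2 hc.le)]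
      nlinarith
  obtain ⟨g, hgv, hg⟩ := exists_extension_of_le_sublinear p (fun w => -q w)
    (fun c hc w => by simp only [q_smul c hc.le, mul_neg])
    (fun w w' => by linarith [q_add w w']) hp
  refine ⟨-g, ?_, fun w => by simpa using neg_le_neg (hg w)⟩
  have hgv' : g v = -q v := (hgv ⟨v, Submodule.mem_span_singleton_self v⟩).trans
    (LinearPMap.mkSpanSingleton'_apply_self _ _ _ _)
  simp [hgv']

section RateMatrix

variable {X : Type*} [Fintype X]

theorem IsRateMatrix.diag_nonpos {Q : Matrix X X ℝ} (hQ : IsRateMatrix Q) (x : X) :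
    Q x x ≤ 0 := by
  classical
  have hsplit := Finset.add_sum_erase Finset.univ (Q x) (Finset.mem_univ x)
  have hoff : 0 ≤ ∑ y ∈ Finset.univ.erase x, Q x y :=
    Finset.sum_nonneg fun y hy => hQ.1 x y (Finset.ne_of_mem_erase hy).symm
  linarith [hQ.2 x]

theorem IsRateMatrix.sum_abs_row {Q : Matrix X X ℝ} (hQ : IsRateMatrix Q) (x : X) :
    ∑ y, |Q x y| = -2 * Q x x := by
  calc ∑ y, |Q x y| = ∑ y, (|Q x y| - Q x y) := by
        rw [Finset.sum_sub_distrib, hQ.2 x, sub_zero]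
    _ = |Q x x| - Q x x := Finset.sum_eq_single x
        (fun y _ hy => by rw [abs_of_nonneg (hQ.1 x y hy.symm), sub_self]) (by simp)
    _ = -2 * Q x x := by rw [abs_of_nonpos (hQ.diag_nonpos x)]; ring

variable [DecidableEq X] {Ql : (X → ℝ) → (X → ℝ)}

theorem matNorm_le_of_mem_dominatingSet {Q : Matrix X X ℝ} (hQ : Q ∈ dominatingSet Ql) :
    matNorm Q ≤ 2 * ∑ x, |Ql (Pi.single x 1) x| := by
  refine Real.iSup_le (fun x => ?_) (by positivity)
  have hdiag : Ql (Pi.single x 1) x ≤ Q x x := by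
    simpa [mulVec_single_one] using hQ.2 (Pi.single x 1) x
  have hterm : |Ql (Pi.single x 1) x| ≤ ∑ x', |Ql (Pi.single x' 1) x'| :=
    Finset.single_le_sum (f := fun x' => |Ql (Pi.single x' 1) x'|)
      (fun _ _ => abs_nonneg _) (Finset.mem_univ x)
  rw [hQ.1.sum_abs_row x]
  linarith [neg_le_abs (Ql (Pi.single x 1) x)]

theorem IsLowerTransitionRateOperator.isRateMatrix_of_le_mulVec
    (hQl : IsLowerTransitionRateOperator Ql) {Q : Matrix X X ℝ} (hQ : ∀ g, Ql g ≤ Q *ᵥ g) :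
    IsRateMatrix Q := by
  refine ⟨fun x y hxy => ?_, fun x => ?_⟩
  · simpa [mulVec_single_one] using (hQl.2.1 x y hxy.symm).trans (hQ (Pi.single y 1) x)
  · have hone := hQ (fun _ => 1) x
    have hneg_one := hQ (fun _ => -1) x
    simp only [hQl.1, Pi.zero_apply, mulVec, dotProduct, mul_one, mul_neg,
      Finset.sum_neg_distrib] at hone hneg_one
    linarith

theorem IsLowerTransitionRateOperator.exists_linearMap_eq_and_le
    (hQl : IsLowerTransitionRateOperator Ql) (f : X → ℝ) :
    ∃ L : (X → ℝ) →ₗ[ℝ] (X → ℝ), L f = Ql f ∧ ∀ g, Ql g ≤ L g := by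
  choose φ hφf hφ using fun x => exists_linearMap_eq_and_le_of_superadditive (Ql · x)
    (fun c hc g => by rw [hQl.2.2.2 c hc g]; rfl) (hQl.2.2.1 · · x) f
  exact ⟨LinearMap.pi φ, funext hφf, fun g x => hφ x g⟩

theorem IsLowerTransitionRateOperator.exists_mem_dominatingSet_mulVec_eq
    (hQl : IsLowerTransitionRateOperator Ql) (f : X → ℝ) :
    ∃ Q ∈ dominatingSet Ql, Ql f = Q *ᵥ f := by
  obtain ⟨L, hLf, hL⟩ := hQl.exists_linearMap_eq_and_le f
  have hQ : ∀ g, Ql g ≤ LinearMap.toMatrix' L *ᵥ g := by simpa using hL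
  exact ⟨_, ⟨hQl.isRateMatrix_of_le_mulVec hQ, hQ⟩, by simp [hLf]⟩

end RateMatrix

theorem stmt11_general {X : Type*} [Fintype X] [DecidableEq X]
    (Ql : (X → ℝ) → (X → ℝ)) (hQl : IsLowerTransitionRateOperator Ql) :
    (dominatingSet Ql).Nonempty ∧
    BddAbove (matNorm '' dominatingSet Ql) ∧
    ∀ f : X → ℝ, ∃ Q ∈ dominatingSet Ql, Ql f = Q.mulVec f := by
  refine ⟨?_, ⟨2 * ∑ x, |Ql (Pi.single x 1) x|, ?_⟩, hQl.exists_mem_dominatingSet_mulVec_eq⟩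
  · obtain ⟨Q, hQ, -⟩ := hQl.exists_mem_dominatingSet_mulVec_eq 0
    exact ⟨Q, hQ⟩
  · rintro - ⟨Q, hQ, rfl⟩
    exact matNorm_le_of_mem_dominatingSet hQ

/-- The set of rate matrices dominating a lower transition rate operator `Q̲` is nonempty
and bounded, and the infimum defining `Q̲` is attained: for each `f` there is a dominating
rate matrix `Q` with `Q̲f = Qf`. -/
theorem stmt11 {X : Type*} [Fintype X] [Nonempty X] [DecidableEq X]
    (Ql : (X → ℝ) → (X → ℝ)) (hQl : IsLowerTransitionRateOperator Ql) :
    (dominatingSet Ql).Nonempty ∧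
    BddAbove (matNorm '' dominatingSet Ql) ∧
    ∀ f : X → ℝ, ∃ Q ∈ dominatingSet Ql, Ql f = Q.mulVec f :=
  stmt11_general Ql hQl
end

section
/- Let 𝒬 be a set of rate matrices indexed by a nonempty finite set 𝒳 that is nonempty, bounded (sup{‖Q‖ : Q ∈ 𝒬} < +∞), closed, convex, and has separately specified rows (i.e. every rate matrix Q such that, for each x ∈ 𝒳, Q(x,·) = Q'(x,·) for some Q' ∈ 𝒬, itself belongs to 𝒬). Let Q̲ be the lower envelope of 𝒬, defined by [Q̲f](x) := inf{[Qf](x) : Q ∈ 𝒬} for all f ∈ ℝ^𝒳 and x ∈ 𝒳. Then 𝒬 = 𝒬_Q̲, where 𝒬_Q̲ := {Q : Q is a rate matrix and Qf ≥ Q̲f pointwise for all f ∈ ℝ^𝒳}. -/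
open scoped BigOperators

lemma clm_eq_sum {X : Type*} [Fintype X] [DecidableEq X] (φ : (X → ℝ) →L[ℝ] ℝ)
    (r : X → ℝ) : φ r = ∑ y, r y * φ (Pi.single y 1) := by
  conv_lhs => rw [← Finset.univ_sum_single r]
  rw [map_sum]
  refine Finset.sum_congr rfl fun y _ => ?_
  have : (Pi.single y (r y) : X → ℝ) = r y • (Pi.single y 1 : X → ℝ) := by
    rw [← Pi.single_smul, smul_eq_mul, mul_one]
  rw [this, map_smul, smul_eq_mul]

/-- A nonempty, bounded, closed, convex set of rate matrices with separately specified rows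
coincides with the set of rate matrices dominating its lower envelope. -/
theorem stmt13 {X : Type*} [Fintype X] [Nonempty X]
    (𝒬 : Set (Matrix X X ℝ)) (hne : 𝒬.Nonempty)
    (hrate : ∀ Q ∈ 𝒬, IsRateMatrix Q)
    (hbdd : BddAbove (matNorm '' 𝒬))
    (hclosed : IsClosed 𝒬) (hconv : Convex ℝ 𝒬)
    (hrows : ∀ Q : Matrix X X ℝ, IsRateMatrix Q →
      (∀ x : X, ∃ Q' ∈ 𝒬, Q x = Q' x) → Q ∈ 𝒬) :
    𝒬 = {Q : Matrix X X ℝ | IsRateMatrix Q ∧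
          ∀ f : X → ℝ, ∀ x : X, lowerEnvOp 𝒬 f x ≤ Q.mulVec f x} := by
  classical
  obtain ⟨M, hM⟩ := hbdd
  have hM' : ∀ Q ∈ 𝒬, matNorm Q ≤ M := fun Q hQ =>
    hM (Set.mem_image_of_mem _ hQ)
  have hrowsum : ∀ Q ∈ 𝒬, ∀ x, ∑ y, |Q x y| ≤ M := by
    intro Q hQ x
    refine le_trans ?_ (hM' Q hQ)
    show (∑ y, |Q x y|) ≤ ⨆ x, ∑ y, |Q x y|
    exact le_ciSup (Set.Finite.bddAbove (Set.finite_range fun x => ∑ y, |Q x y|)) x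
  have hentry : ∀ Q ∈ 𝒬, ∀ x y, |Q x y| ≤ M := by
    intro Q hQ x y
    refine le_trans ?_ (hrowsum Q hQ x)
    exact Finset.single_le_sum (fun i _ => abs_nonneg (Q x i)) (Finset.mem_univ y)
  haveI : Nonempty 𝒬 := hne.to_subtype
  -- lower envelope is below each member
  have hdom : ∀ Q ∈ 𝒬, ∀ f (x : X), lowerEnvOp 𝒬 f x ≤ Q.mulVec f x := by
    intro Q hQ f x
    have hbb : BddBelow (Set.range fun Q' : 𝒬 => (Q' : Matrix X X ℝ).mulVec f x) := by
      refine ⟨-(M * ∑ y, |f y|), ?_⟩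
      rintro _ ⟨Q', rfl⟩
      have habs : |(Q' : Matrix X X ℝ).mulVec f x| ≤ M * ∑ y, |f y| := by
        show |∑ y, Q'.1 x y * f y| ≤ _
        calc |∑ y, Q'.1 x y * f y| ≤ ∑ y, |Q'.1 x y * f y| :=
              Finset.abs_sum_le_sum_abs _ _
          _ ≤ ∑ y, M * |f y| := by
              refine Finset.sum_le_sum fun y _ => ?_
              rw [abs_mul]
              exact mul_le_mul_of_nonneg_right (hentry _ Q'.2 x y) (abs_nonneg _)
          _ = M * ∑ y, |f y| := by rw [Finset.mul_sum]
      have := neg_abs_le ((Q' : Matrix X X ℝ).mulVec f x)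
      linarith
    exact ciInf_le hbb ⟨Q, hQ⟩
  -- compactness of 𝒬
  have hQcomp : IsCompact 𝒬 := by
    have hK : IsCompact ((Set.univ : Set X).pi fun _ =>
        (Set.univ : Set X).pi fun _ => Set.Icc (-M) M : Set (X → X → ℝ)) :=
      isCompact_univ_pi fun _ => isCompact_univ_pi fun _ => isCompact_Icc
    refine hK.of_isClosed_subset hclosed ?_
    intro Q hQ x _ y _
    have := abs_le.mp (hentry Q hQ x y)
    exact ⟨this.1, this.2⟩
  ext Q
  constructor
  · intro hQ
    exact ⟨hrate Q hQ, fun f x => hdom Q hQ f x⟩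
  · rintro ⟨hQrate, hQdom⟩
    refine hrows Q hQrate fun x => ?_
    set S : Set (X → ℝ) := (fun A : Matrix X X ℝ => A x) '' 𝒬 with hS
    by_contra hx
    push_neg at hx
    have hxS : Q x ∉ S := by
      rintro ⟨Q', hQ', h⟩
      exact hx Q' hQ' h.symm
    have hScomp : IsCompact S := hQcomp.image (continuous_apply x)
    have hSconv : Convex ℝ S := by
      rintro r ⟨A, hA, rfl⟩ r' ⟨B, hB, rfl⟩ a b ha hb hab
      exact ⟨a • A + b • B, hconv hA hB ha hb hab, rfl⟩
    obtain ⟨φ, u, hφu, hu⟩ :=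
      geometric_hahn_banach_point_closed hSconv hScomp.isClosed hxS
    set f : X → ℝ := fun y => φ (Pi.single y 1) with hf
    have hrep : ∀ A : Matrix X X ℝ, φ (A x) = A.mulVec f x := by
      intro A
      rw [clm_eq_sum]
      rfl
    have h3 : u ≤ lowerEnvOp 𝒬 f x := by
      refine le_ciInf fun Q' => ?_
      have := hu (Q'.1 x) ⟨Q'.1, Q'.2, rfl⟩
      rw [hrep Q'.1] at this
      exact this.le
    have h4 : lowerEnvOp 𝒬 f x ≤ Q.mulVec f x := hQdom f x
    rw [hrep Q] at hφu
    linarith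
end

section
/- Let 𝒬 be a nonempty bounded set of rate matrices indexed by a nonempty finite set 𝒳, and let Q̲ be its lower envelope, defined by [Q̲f](x) := inf{[Qf](x) : Q ∈ 𝒬}. Then for every Q ∈ 𝒬 one has ‖Q‖ ≤ ‖Q̲‖, where ‖Q̲‖ := sup{‖Q̲f‖ : f ∈ ℝ^𝒳, ‖f‖ = 1} and ‖Q‖ is the matrix operator norm induced by the supremum norm. -/
open scoped BigOperators

/-- The operator norm `‖A‖ = sup{‖Af‖ : ‖f‖ = 1}` of a map of `ℝ^𝒳`, where `‖·‖` is the
supremum norm. -/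
noncomputable def opNorm {X : Type*} [Fintype X] (A : (X → ℝ) → (X → ℝ)) : ℝ :=
  ⨆ f : {f : X → ℝ // ‖f‖ = 1}, ‖A f.1‖

lemma rowSum_le_matNorm {X : Type*} [Fintype X] (A : Matrix X X ℝ) (x : X) :
    ∑ y, |A x y| ≤ matNorm A := by
  exact le_ciSup (Finite.bddAbove_range fun x => ∑ y, |A x y|) x

lemma abs_mulVec_le {X : Type*} [Fintype X] (A : Matrix X X ℝ) (f : X → ℝ)
    (hf : ‖f‖ ≤ 1) (x : X) : |A.mulVec f x| ≤ matNorm A := by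
  refine le_trans ?_ (rowSum_le_matNorm A x)
  calc |A.mulVec f x| ≤ ∑ y, |A x y * f y| := Finset.abs_sum_le_sum_abs _ _
    _ ≤ ∑ y, |A x y| := by
        refine Finset.sum_le_sum fun y _ => ?_
        rw [abs_mul]
        have h1 : |f y| ≤ 1 := by
          have := norm_le_pi_norm f y
          rw [Real.norm_eq_abs] at this
          linarith
        nlinarith [abs_nonneg (A x y)]

/-- mulVec of a rate matrix against the test function. -/
lemma rate_mulVec_test {X : Type*} [Fintype X] [DecidableEq X] (Q : Matrix X X ℝ)
    (hQ : IsRateMatrix Q) (x : X) :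
    Q.mulVec (fun y => if y = x then (1 : ℝ) else -1) x = 2 * Q x x := by
  have hsum := hQ.2 x
  have herase : ∑ y ∈ Finset.univ.erase x, Q x y = -Q x x := by
    have := Finset.sum_erase_add Finset.univ (Q x) (Finset.mem_univ x)
    linarith
  unfold Matrix.mulVec dotProduct
  rw [← Finset.sum_erase_add Finset.univ _ (Finset.mem_univ x)]
  simp only [if_pos rfl, mul_one]
  have : ∑ y ∈ Finset.univ.erase x, Q x y * (if y = x then (1:ℝ) else -1)
      = -∑ y ∈ Finset.univ.erase x, Q x y := by
    rw [← Finset.sum_neg_distrib]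
    refine Finset.sum_congr rfl fun y hy => ?_
    rw [if_neg (Finset.mem_erase.mp hy).1]
    ring
  rw [this, herase]
  norm_num
  ring

/-- Each element of a nonempty bounded set of rate matrices has norm at most the operator
norm of the set's lower envelope. -/
theorem stmt14 {X : Type*} [Fintype X] [Nonempty X]
    (𝒬 : Set (Matrix X X ℝ)) (hne : 𝒬.Nonempty)
    (hrate : ∀ Q ∈ 𝒬, IsRateMatrix Q)
    (hbdd : BddAbove (matNorm '' 𝒬)) :
    ∀ Q ∈ 𝒬, matNorm Q ≤ opNorm (lowerEnvOp 𝒬) := by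
  classical
  obtain ⟨C, hC⟩ := hbdd
  rw [mem_upperBounds] at hC
  have hCQ : ∀ Q' ∈ 𝒬, matNorm Q' ≤ C := fun Q' h => hC _ ⟨Q', h, rfl⟩
  haveI : Nonempty ↥𝒬 := hne.to_subtype
  obtain ⟨Q₀, hQ₀⟩ := hne
  have hC0 : 0 ≤ C := by
    have h1 : (0:ℝ) ≤ ∑ y, |Q₀ (Classical.arbitrary X) y| :=
      Finset.sum_nonneg fun y _ => abs_nonneg _
    have h2 := rowSum_le_matNorm Q₀ (Classical.arbitrary X)
    have h3 := hCQ Q₀ hQ₀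
    linarith
  -- envelope values are bounded in abs by C, for unit f
  have henv : ∀ (f : X → ℝ), ‖f‖ ≤ 1 → ∀ x, |lowerEnvOp 𝒬 f x| ≤ C := by
    intro f hf x
    have hb : ∀ Q' : 𝒬, -C ≤ (Q' : Matrix X X ℝ).mulVec f x := by
      intro Q'
      have h1 := abs_mulVec_le (Q' : Matrix X X ℝ) f hf x
      have h2 := hCQ Q' Q'.2
      cases abs_le.mp (le_trans h1 h2) with
      | intro hl hr => linarith
    have hbdd' : BddBelow (Set.range fun Q' : 𝒬 => (Q' : Matrix X X ℝ).mulVec f x) :=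
      ⟨-C, by rintro _ ⟨Q', rfl⟩; exact hb Q'⟩
    have hlow : -C ≤ lowerEnvOp 𝒬 f x := le_ciInf hb
    have hup : lowerEnvOp 𝒬 f x ≤ C := by
      have h1 : lowerEnvOp 𝒬 f x ≤ (⟨Q₀, hQ₀⟩ : 𝒬).1.mulVec f x := ciInf_le hbdd' _
      have h2 := abs_mulVec_le Q₀ f hf x
      have h3 := hCQ Q₀ hQ₀
      cases abs_le.mp (le_trans h2 h3) with
      | intro hl hr => exact le_trans h1 (le_trans hr (by linarith))
    exact abs_le.mpr ⟨hlow, hup⟩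
  -- opNorm range bounded above by C
  have hopbdd : BddAbove (Set.range fun g : {f : X → ℝ // ‖f‖ = 1} => ‖lowerEnvOp 𝒬 g.1‖) := by
    refine ⟨C, ?_⟩
    rintro _ ⟨g, rfl⟩
    exact pi_norm_le_iff_of_nonneg hC0 |>.mpr fun x => by
      rw [Real.norm_eq_abs]; exact henv g.1 (le_of_eq g.2) x
  intro Q hQ
  refine ciSup_le fun x => ?_
  -- test function
  set f : X → ℝ := fun y => if y = x then 1 else -1 with hf_def
  have hfnorm : ‖f‖ = 1 := by
    apply le_antisymm
    · refine pi_norm_le_iff_of_nonneg zero_le_one |>.mpr fun y => ?_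
      rw [Real.norm_eq_abs, hf_def]
      dsimp only
      split <;> simp
    · have := norm_le_pi_norm f x
      rw [Real.norm_eq_abs, hf_def] at this
      simpa using this
  -- row sum of Q equals -2 Q x x
  have hQr := hrate Q hQ
  have hdiag : Q x x ≤ 0 := by
    have hsum := hQr.2 x
    have herase : ∑ y ∈ Finset.univ.erase x, Q x y = -Q x x := by
      have := Finset.sum_erase_add Finset.univ (Q x) (Finset.mem_univ x)
      linarith
    have hpos : (0:ℝ) ≤ ∑ y ∈ Finset.univ.erase x, Q x y :=
      Finset.sum_nonneg fun y hy => hQr.1 x y (Ne.symm (Finset.mem_erase.mp hy).1)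
    linarith
  have hrow : ∑ y, |Q x y| = -(2 * Q x x) := by
    rw [← Finset.sum_erase_add Finset.univ _ (Finset.mem_univ x)]
    have h1 : ∑ y ∈ Finset.univ.erase x, |Q x y| = ∑ y ∈ Finset.univ.erase x, Q x y := by
      refine Finset.sum_congr rfl fun y hy => ?_
      exact abs_of_nonneg (hQr.1 x y (Ne.symm (Finset.mem_erase.mp hy).1))
    have herase : ∑ y ∈ Finset.univ.erase x, Q x y = -Q x x := by
      have := Finset.sum_erase_add Finset.univ (Q x) (Finset.mem_univ x)
      have hsum := hQr.2 x
      linarith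
    rw [h1, herase, abs_of_nonpos hdiag]
    ring
  -- envelope at x ≤ 2 Q x x
  have hbdd' : BddBelow (Set.range fun Q' : 𝒬 => (Q' : Matrix X X ℝ).mulVec f x) := by
    refine ⟨-C, ?_⟩
    rintro _ ⟨Q', rfl⟩
    have h1 := abs_mulVec_le (Q' : Matrix X X ℝ) f (le_of_eq hfnorm) x
    have h2 := hCQ Q' Q'.2
    cases abs_le.mp (le_trans h1 h2) with
    | intro hl hr => linarith
  have hle : lowerEnvOp 𝒬 f x ≤ 2 * Q x x := by
    have h1 : lowerEnvOp 𝒬 f x ≤ (⟨Q, hQ⟩ : 𝒬).1.mulVec f x := ciInf_le hbdd' _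
    rw [show ((⟨Q, hQ⟩ : 𝒬) : Matrix X X ℝ).mulVec f x = 2 * Q x x from
      rate_mulVec_test Q hQr x] at h1
    exact h1
  -- conclude
  have habs : ∑ y, |Q x y| ≤ |lowerEnvOp 𝒬 f x| := by
    rw [hrow]
    have : lowerEnvOp 𝒬 f x ≤ 0 := le_trans hle (by linarith)
    rw [abs_of_nonpos this]
    linarith
  have hnorm : |lowerEnvOp 𝒬 f x| ≤ ‖lowerEnvOp 𝒬 f‖ := by
    have := norm_le_pi_norm (lowerEnvOp 𝒬 f) x
    rwa [Real.norm_eq_abs] at this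
  have hop : ‖lowerEnvOp 𝒬 f‖ ≤ opNorm (lowerEnvOp 𝒬) :=
    le_ciSup hopbdd (⟨f, hfnorm⟩ : {f : X → ℝ // ‖f‖ = 1})
  linarith
end
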